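/- Let I = (𝔼, D, c, f) be a CMP instance whose objective f is of type sum, product, or bottleneck, let E = {e_1,…,e_k} ⊆ 𝔼, and let α⃗ = (α_1,…,α_k) with α_l ≥ 0 for all l = 1,…,k; if f is of type product assume additionally α_l < c(e_l) for all l. If S_1* and S_2* are optimal solutions of I with E ⊆ 𝔼 ∖ S_1* and E ⊄ 𝔼 ∖ S_2*, then f_{−α⃗,E}(S_2*) ≤ f_{−α⃗,E}(S_1*), where f_{−α⃗,E} denotes the objective of the perturbed instance I_{−α⃗,E}. -/

import Mathlib

open scoped ENNReal BigOperators

/-- Objective type of a combinatorial minimization problem: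
sum, product, or bottleneck. -/
inductive ObjType where
  | sum : ObjType
  | prod : ObjType
  | bottleneck : ObjType
deriving DecidableEq

/-- The cost `f_c(S)` of a feasible solution `S` under cost function `c`:
the sum, the product, or the maximum (for nonempty `S`) of the element costs. -/
noncomputable def objCost {ι : Type*} (t : ObjType) (c : ι → ℝ) (S : Finset ι) : ℝ :=
  match t with
  | ObjType.sum => ∑ e ∈ S, c e
  | ObjType.prod => ∏ e ∈ S, c e
  | ObjType.bottleneck => if h : S.Nonempty then S.sup' h c else 0

/-- The optimal objective value `f(I)` of the instance with feasible set `D`. -/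
noncomputable def optVal {ι : Type*} (t : ObjType) (c : ι → ℝ) (D : Finset (Finset ι)) : ℝ :=
  if h : D.Nonempty then D.inf' h (objCost t c) else 0

/-- `S` is an optimal solution of the instance `(𝔼, D, c, f)`. -/
def isOpt {ι : Type*} (t : ObjType) (c : ι → ℝ) (D : Finset (Finset ι)) (S : Finset ι) : Prop :=
  S ∈ D ∧ objCost t c S = optVal t c D

/-- `0 ≤ a < maxdec(e)`, where `maxdec(e) = ∞` for sum/bottleneck objectives and
`maxdec(e) = c(e)` for the product objective. -/
def decOK {ι : Type*} (t : ObjType) (c : ι → ℝ) (e : ι) (a : ℝ) : Prop :=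
  0 ≤ a ∧ (t = ObjType.prod → a < c e)

/-- Extended single upper tolerance
`u'(I,e) = sup {α ≥ 0 : every optimal solution of I is optimal for I_{α,e}}` valued in `[0,∞]`. -/
noncomputable def uTol {ι : Type*} [DecidableEq ι] (t : ObjType) (c : ι → ℝ)
    (D : Finset (Finset ι)) (e : ι) : ℝ≥0∞ :=
  sSup (ENNReal.ofReal '' {a : ℝ | 0 ≤ a ∧
    ∀ S : Finset ι, isOpt t c D S →
      isOpt t (fun x => if x = e then c x + a else c x) D S})

/-- Extended regular set upper tolerance `u'(I,E)`, valued in `[0,∞]`. -/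
noncomputable def uTolSet {ι : Type*} [DecidableEq ι] (t : ObjType) (c : ι → ℝ)
    (D : Finset (Finset ι)) (E : Finset ι) : ℝ≥0∞ :=
  sSup (ENNReal.ofReal '' {a : ℝ |
    ∀ S : Finset ι, isOpt t c D S →
      ∃ α : ι → ℝ, (∀ x, 0 ≤ α x) ∧ (∀ x ∉ E, α x = 0) ∧
        a = ∑ x ∈ E, α x ∧ isOpt t (fun x => c x + α x) D S})

/-- Extended reverse set upper tolerance `u_b'(I,E)`, valued in `[0,∞]` (`inf ∅ = ∞`). -/
noncomputable def uTolSetRev {ι : Type*} [DecidableEq ι] (t : ObjType) (c : ι → ℝ)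
    (D : Finset (Finset ι)) (E : Finset ι) : ℝ≥0∞ :=
  sInf (ENNReal.ofReal '' {a : ℝ |
    ∃ S : Finset ι, isOpt t c D S ∧
      ∃ α : ι → ℝ, (∀ x, 0 ≤ α x) ∧ (∀ x ∉ E, α x = 0) ∧
        a = ∑ x ∈ E, α x ∧ ¬ isOpt t (fun x => c x + α x) D S})

/-- New single lower tolerance
`l'(I,e) = sup {α : 0 ≤ α < maxdec(e), f(I_{−α,e}) = f(I)}`, valued in `[0,∞]`. -/
noncomputable def lTol {ι : Type*} [DecidableEq ι] (t : ObjType) (c : ι → ℝ)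
    (D : Finset (Finset ι)) (e : ι) : ℝ≥0∞ :=
  sSup (ENNReal.ofReal '' {a : ℝ | decOK t c e a ∧
    optVal t (fun x => if x = e then c x - a else c x) D = optVal t c D})

/-- New regular set lower tolerance `l'(I,E)`, valued in `[0,∞]`. -/
noncomputable def lTolSet {ι : Type*} [DecidableEq ι] (t : ObjType) (c : ι → ℝ)
    (D : Finset (Finset ι)) (E : Finset ι) : ℝ≥0∞ :=
  sSup (ENNReal.ofReal '' {a : ℝ |
    ∃ α : ι → ℝ, (∀ x ∈ E, decOK t c x (α x)) ∧ (∀ x ∉ E, α x = 0) ∧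
      a = ∑ x ∈ E, α x ∧ optVal t (fun x => c x - α x) D = optVal t c D})

/-- New reverse set lower tolerance `l_b'(I,E)`, valued in `[0,∞]` (`inf ∅ = ∞`). -/
noncomputable def lTolSetRev {ι : Type*} [DecidableEq ι] (t : ObjType) (c : ι → ℝ)
    (D : Finset (Finset ι)) (E : Finset ι) : ℝ≥0∞ :=
  sInf (ENNReal.ofReal '' {a : ℝ |
    ∃ α : ι → ℝ, (∀ x ∈ E, decOK t c x (α x)) ∧ (∀ x ∉ E, α x = 0) ∧
      a = ∑ x ∈ E, α x ∧ optVal t (fun x => c x - α x) D < optVal t c D})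


section

variable {ι : Type*} (t : ObjType) {c c' : ι → ℝ} {S : Finset ι}

theorem objCost_congr (h : ∀ x ∈ S, c x = c' x) : objCost t c S = objCost t c' S := by
  cases t with
  | sum => exact Finset.sum_congr rfl h
  | prod => exact Finset.prod_congr rfl h
  | bottleneck =>
    by_cases hS : S.Nonempty
    · simp only [objCost, dif_pos hS]
      exact Finset.sup'_congr hS rfl h
    · simp only [objCost, dif_neg hS]

theorem objCost_mono (h : ∀ x ∈ S, c' x ≤ c x) (hnonneg : t = ObjType.prod → ∀ x ∈ S, 0 ≤ c' x) :
    objCost t c' S ≤ objCost t c S := by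
  cases t with
  | sum => exact Finset.sum_le_sum h
  | prod => exact Finset.prod_le_prod (hnonneg rfl) h
  | bottleneck =>
    by_cases hS : S.Nonempty
    · simp only [objCost, dif_pos hS]
      exact Finset.sup'_mono_fun h
    · simp only [objCost, dif_neg hS, le_refl]

end

theorem obs_settol_b_general {ι : Type*}
    (t : ObjType) (c : ι → ℝ) (D : Finset (Finset ι))
    (hpos : t = ObjType.prod → ∀ x, 0 < c x)
    (E : Finset ι)
    (α : ι → ℝ) (hα0 : ∀ x, 0 ≤ α x) (hαsupp : ∀ x ∉ E, α x = 0)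
    (hαlt : t = ObjType.prod → ∀ x ∈ E, α x < c x)
    (S₁ S₂ : Finset ι) (h₁ : isOpt t c D S₁) (h₂ : isOpt t c D S₂)
    (hES₁ : ∀ x ∈ E, x ∉ S₁) :
    objCost t (fun x => c x - α x) S₂ ≤ objCost t (fun x => c x - α x) S₁ := by
  have hdec_nonneg : t = ObjType.prod → ∀ x ∈ S₂, 0 ≤ c x - α x := by
    rintro rfl x -
    by_cases hx : x ∈ E
    · linarith [hαlt rfl x hx]
    · linarith [hαsupp x hx, hpos rfl x]
  have hunchanged : ∀ x ∈ S₁, c x - α x = c x := fun x hx => by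
    rw [hαsupp x fun hxE => hES₁ x hxE hx, sub_zero]
  calc objCost t (fun x => c x - α x) S₂
      ≤ objCost t c S₂ := objCost_mono t (fun x _ => sub_le_self _ (hα0 x)) hdec_nonneg
    _ = objCost t c S₁ := h₂.2.trans h₁.2.symm
    _ = objCost t (fun x => c x - α x) S₁ := (objCost_congr t hunchanged).symm

/-- Observation 1(b): if the costs of the elements of `E` are decreased by
nonnegative amounts (less than `c(e)` in the product case), then any optimal
solution meeting `E` is at most as expensive (in the perturbed instance) as
any optimal solution disjoint from `E`. -/
theorem obs_settol_b {ι : Type*} [Fintype ι] [DecidableEq ι]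
    (t : ObjType) (c : ι → ℝ) (D : Finset (Finset ι))
    (hD : D.Nonempty) (hSne : ∀ S ∈ D, S.Nonempty)
    (hpos : t = ObjType.prod → ∀ x, 0 < c x)
    (E : Finset ι) (hE : E.Nonempty)
    (α : ι → ℝ) (hα0 : ∀ x, 0 ≤ α x) (hαsupp : ∀ x ∉ E, α x = 0)
    (hαlt : t = ObjType.prod → ∀ x ∈ E, α x < c x)
    (S₁ S₂ : Finset ι) (h₁ : isOpt t c D S₁) (h₂ : isOpt t c D S₂)
    (hES₁ : ∀ x ∈ E, x ∉ S₁) (hES₂ : ∃ x ∈ E, x ∈ S₂) :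
    objCost t (fun x => c x - α x) S₂ ≤ objCost t (fun x => c x - α x) S₁ :=
  obs_settol_b_general t c D hpos E α hα0 hαsupp hαlt S₁ S₂ h₁ h₂ hES₁
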